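/- arXiv:1801.03186 — 5 statements merged into one kernel-verified Lean document; each statement's English description precedes it below -/
import Mathlib

section
/- Let d ≥ 1 and let x₀, x₁, v₀, v₁ ∈ ℝ^d. Then the infimum of ∫₀¹ ‖X''(t)‖² dt over all twice continuously differentiable curves X : [0,1] → ℝ^d with X(0) = x₀, X(1) = x₁, X'(0) = v₀, X'(1) = v₁ equals c(x₀,x₁,v₀,v₁), and this infimum is attained. In particular, every such admissible curve X satisfies ∫₀¹ ‖X''(t)‖² dt ≥ c(x₀,x₁,v₀,v₁). -/
/-!
Writing `M(t) = a + t • b` for an affine curve, integrating by parts twice shows that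
`∫₀¹ ⟪M, X''⟫` depends only on the endpoint positions and velocities of `X`. The cubic Hermite
interpolant `H` of the data has affine `H''`, so for every admissible `X` the cross term
`∫ ⟪H'', X''⟫` equals `∫ ‖H''‖²`, and expanding `0 ≤ ∫ ‖X'' - H''‖²` gives
`∫ ‖H''‖² ≤ ∫ ‖X''‖²`. A direct computation shows `∫ ‖H''‖² = c(x₀, x₁, v₀, v₁)`.
-/

open MeasureTheory

noncomputable section

def splineCost {d : ℕ} (x x' v v' : EuclideanSpace ℝ (Fin d)) : ℝ :=
  12 * ‖x' - x - v‖ ^ 2 - 12 * (inner ℝ (x' - x - v) (v' - v) : ℝ) + 4 * ‖v' - v‖ ^ 2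

open scoped RealInnerProductSpace

section

variable {E : Type*} [NormedAddCommGroup E] [InnerProductSpace ℝ E]

theorem ContDiff.continuous_deriv_deriv {X : ℝ → E} (hX : ContDiff ℝ 2 X) :
    Continuous (deriv (deriv X)) :=
  (hX.deriv' (n := 1)).continuous_deriv_one

theorem integral_inner_affine_deriv_deriv (a b : E) {X : ℝ → E} (hX : ContDiff ℝ 2 X)
    (s u : ℝ) :
    ∫ t in s..u, ⟪a + t • b, deriv (deriv X) t⟫ =
      ⟪a + u • b, deriv X u⟫ - ⟪a + s • b, deriv X s⟫ - ⟪b, X u - X s⟫ := by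
  have hF : ∀ t, HasDerivAt (fun t => ⟪a + t • b, deriv X t⟫ - ⟪b, X t⟫)
      ⟪a + t • b, deriv (deriv X) t⟫ t := by
    intro t
    have hM : HasDerivAt (fun t : ℝ => a + t • b) b t := by
      simpa using ((hasDerivAt_id t).smul_const b).const_add a
    have h1 := hM.inner ℝ (hX.differentiable_deriv_two t).hasDerivAt
    have h2 := (hasDerivAt_const t b).inner ℝ ((hX.differentiable two_ne_zero) t).hasDerivAt
    exact (h1.sub h2).congr_deriv (by simp)
  rw [intervalIntegral.integral_eq_sub_of_hasDerivAt (fun t _ => hF t)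
    (((continuous_const.add (continuous_id.smul continuous_const)).inner
      hX.continuous_deriv_deriv).intervalIntegrable s u)]
  simp only [inner_sub_right]
  ring

theorem integral_norm_sq_deriv_deriv_le_of_affine {X Y : ℝ → E} (hX : ContDiff ℝ 2 X)
    (hY : ContDiff ℝ 2 Y) {a b : E} (hY₂ : ∀ t, deriv (deriv Y) t = a + t • b) {s u : ℝ}
    (hsu : s ≤ u) (hs : X s = Y s) (hu : X u = Y u) (hs' : deriv X s = deriv Y s)
    (hu' : deriv X u = deriv Y u) :
    ∫ t in s..u, ‖deriv (deriv Y) t‖ ^ 2 ≤ ∫ t in s..u, ‖deriv (deriv X) t‖ ^ 2 := by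
  have hM : Continuous fun t : ℝ => a + t • b := by fun_prop
  have hW := hX.continuous_deriv_deriv
  have hY_energy : ∫ t in s..u, ‖deriv (deriv Y) t‖ ^ 2 = ∫ t in s..u, ‖a + t • b‖ ^ 2 := by
    simp only [hY₂]
  have hcross : ∫ t in s..u, ⟪a + t • b, deriv (deriv X) t⟫ = ∫ t in s..u, ‖a + t • b‖ ^ 2 := by
    have h := integral_inner_affine_deriv_deriv a b hY s u
    simp only [hY₂, real_inner_self_eq_norm_sq] at h
    rw [h, integral_inner_affine_deriv_deriv a b hX, hs, hu, hs', hu']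
  have hpointwise : ∀ t, 2 * ⟪a + t • b, deriv (deriv X) t⟫ - ‖a + t • b‖ ^ 2
      ≤ ‖deriv (deriv X) t‖ ^ 2 := by
    intro t
    nlinarith [norm_sub_sq_real (deriv (deriv X) t) (a + t • b),
      real_inner_comm (a + t • b) (deriv (deriv X) t), sq_nonneg ‖deriv (deriv X) t - (a + t • b)‖]
  calc ∫ t in s..u, ‖deriv (deriv Y) t‖ ^ 2
      = ∫ t in s..u, (2 * ⟪a + t • b, deriv (deriv X) t⟫ - ‖a + t • b‖ ^ 2) := by
        have hMsq : IntervalIntegrable (fun t => ‖a + t • b‖ ^ 2) volume s u :=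
          (hM.norm.pow 2).intervalIntegrable s u
        rw [intervalIntegral.integral_sub (((hM.inner hW).intervalIntegrable s u).const_mul 2)
          hMsq, intervalIntegral.integral_const_mul, hcross, hY_energy]
        ring
    _ ≤ ∫ t in s..u, ‖deriv (deriv X) t‖ ^ 2 :=
        intervalIntegral.integral_mono_on hsu
          ((((hM.inner hW).const_mul 2).sub (hM.norm.pow 2)).intervalIntegrable s u)
          ((hW.norm.pow 2).intervalIntegrable s u) fun t _ => hpointwise t

theorem integral_norm_sq_affine (a b : E) :
    ∫ t in (0 : ℝ)..1, ‖a + t • b‖ ^ 2 = ‖a‖ ^ 2 + ⟪a, b⟫ + ‖b‖ ^ 2 / 3 := by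
  have h : ∀ t : ℝ, ‖a + t • b‖ ^ 2 = ‖a‖ ^ 2 + 2 * ⟪a, b⟫ * t + ‖b‖ ^ 2 * t ^ 2 := by
    intro t
    rw [norm_add_sq_real, norm_smul, real_inner_smul_right, mul_pow, Real.norm_eq_abs, sq_abs]
    ring
  simp only [h]
  rw [intervalIntegral.integral_add, intervalIntegral.integral_add, intervalIntegral.integral_const,
    intervalIntegral.integral_const_mul, integral_id, intervalIntegral.integral_const_mul,
    integral_pow]
  · norm_num
    ring
  all_goals exact Continuous.intervalIntegrable (by fun_prop) _ _

def cubicCurve (c₀ c₁ c₂ c₃ : E) (t : ℝ) : E := c₀ + t • c₁ + t ^ 2 • c₂ + t ^ 3 • c₃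

theorem contDiff_cubicCurve (c₀ c₁ c₂ c₃ : E) {n : WithTop ℕ∞} :
    ContDiff ℝ n (cubicCurve c₀ c₁ c₂ c₃) := by
  unfold cubicCurve
  fun_prop

theorem deriv_cubicCurve (c₀ c₁ c₂ c₃ : E) :
    deriv (cubicCurve c₀ c₁ c₂ c₃) = cubicCurve c₁ ((2 : ℝ) • c₂) ((3 : ℝ) • c₃) 0 := by
  ext t
  have h : HasDerivAt (cubicCurve c₀ c₁ c₂ c₃) _ t :=
    (((hasDerivAt_const t c₀).add ((hasDerivAt_id t).smul_const c₁)).add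
      ((hasDerivAt_pow 2 t).smul_const c₂)).add ((hasDerivAt_pow 3 t).smul_const c₃)
  rw [h.deriv]
  simp [cubicCurve, smul_smul, mul_comm]

theorem deriv_deriv_cubicCurve (c₀ c₁ c₂ c₃ : E) (t : ℝ) :
    deriv (deriv (cubicCurve c₀ c₁ c₂ c₃)) t = (2 : ℝ) • c₂ + t • (6 : ℝ) • c₃ := by
  simp only [deriv_cubicCurve, cubicCurve, smul_smul]
  norm_num

def hermiteCubic (x₀ x₁ v₀ v₁ : E) : ℝ → E :=
  cubicCurve x₀ v₀ ((3 : ℝ) • (x₁ - x₀ - v₀) - (v₁ - v₀)) (v₁ - v₀ - (2 : ℝ) • (x₁ - x₀ - v₀))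

section Hermite

variable (x₀ x₁ v₀ v₁ : E)

theorem hermiteCubic_zero : hermiteCubic x₀ x₁ v₀ v₁ 0 = x₀ := by
  simp [hermiteCubic, cubicCurve]

theorem hermiteCubic_one : hermiteCubic x₀ x₁ v₀ v₁ 1 = x₁ := by
  simp only [hermiteCubic, cubicCurve, one_pow, one_smul]
  module

theorem deriv_hermiteCubic_zero : deriv (hermiteCubic x₀ x₁ v₀ v₁) 0 = v₀ := by
  simp [hermiteCubic, deriv_cubicCurve, cubicCurve]

theorem deriv_hermiteCubic_one : deriv (hermiteCubic x₀ x₁ v₀ v₁) 1 = v₁ := by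
  simp only [hermiteCubic, deriv_cubicCurve, cubicCurve, one_pow, one_smul, smul_zero, add_zero]
  module

theorem contDiff_hermiteCubic {n : WithTop ℕ∞} : ContDiff ℝ n (hermiteCubic x₀ x₁ v₀ v₁) :=
  contDiff_cubicCurve _ _ _ _

theorem deriv_deriv_hermiteCubic (t : ℝ) :
    deriv (deriv (hermiteCubic x₀ x₁ v₀ v₁)) t =
      (2 : ℝ) • ((3 : ℝ) • (x₁ - x₀ - v₀) - (v₁ - v₀)) +
        t • (6 : ℝ) • (v₁ - v₀ - (2 : ℝ) • (x₁ - x₀ - v₀)) :=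
  deriv_deriv_cubicCurve _ _ _ _ t

theorem integral_norm_sq_deriv_deriv_hermiteCubic :
    ∫ t in (0 : ℝ)..1, ‖deriv (deriv (hermiteCubic x₀ x₁ v₀ v₁)) t‖ ^ 2 =
      12 * ‖x₁ - x₀ - v₀‖ ^ 2 - 12 * ⟪x₁ - x₀ - v₀, v₁ - v₀⟫ + 4 * ‖v₁ - v₀‖ ^ 2 := by
  simp only [deriv_deriv_hermiteCubic, integral_norm_sq_affine]
  generalize x₁ - x₀ - v₀ = p, v₁ - v₀ = q
  simp only [← real_inner_self_eq_norm_sq, inner_sub_left, inner_sub_right, real_inner_smul_left,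
    real_inner_smul_right, real_inner_comm p q]
  ring

end Hermite

end

theorem stmt0_general (d : ℕ) (x₀ x₁ v₀ v₁ : EuclideanSpace ℝ (Fin d)) :
    IsLeast { y : ℝ | ∃ X : ℝ → EuclideanSpace ℝ (Fin d), ContDiff ℝ 2 X ∧
        X 0 = x₀ ∧ X 1 = x₁ ∧ deriv X 0 = v₀ ∧ deriv X 1 = v₁ ∧
        y = ∫ t in (0:ℝ)..1, ‖deriv (deriv X) t‖ ^ 2 }
      (splineCost x₀ x₁ v₀ v₁) := by
  set H := hermiteCubic x₀ x₁ v₀ v₁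
  have hH_energy : ∫ t in (0 : ℝ)..1, ‖deriv (deriv H) t‖ ^ 2 = splineCost x₀ x₁ v₀ v₁ :=
    integral_norm_sq_deriv_deriv_hermiteCubic x₀ x₁ v₀ v₁
  refine ⟨⟨H, contDiff_hermiteCubic .., hermiteCubic_zero .., hermiteCubic_one ..,
    deriv_hermiteCubic_zero .., deriv_hermiteCubic_one .., hH_energy.symm⟩, ?_⟩
  rintro _ ⟨X, hX, hX₀, hX₁, hX₀', hX₁', rfl⟩
  rw [← hH_energy]
  exact integral_norm_sq_deriv_deriv_le_of_affine hX (contDiff_hermiteCubic ..)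
    (deriv_deriv_hermiteCubic x₀ x₁ v₀ v₁) zero_le_one (by rw [hX₀, hermiteCubic_zero])
    (by rw [hX₁, hermiteCubic_one]) (by rw [hX₀', deriv_hermiteCubic_zero])
    (by rw [hX₁', deriv_hermiteCubic_one])

/-- The infimum of `∫₀¹ ‖X''‖²` over C² curves with prescribed endpoint positions and
velocities equals `c(x₀,x₁,v₀,v₁)`, and it is attained; in particular every admissible
curve has energy at least `c(x₀,x₁,v₀,v₁)`. -/
theorem stmt0 (d : ℕ) (hd : 1 ≤ d) (x₀ x₁ v₀ v₁ : EuclideanSpace ℝ (Fin d)) :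
    IsLeast { y : ℝ | ∃ X : ℝ → EuclideanSpace ℝ (Fin d), ContDiff ℝ 2 X ∧
        X 0 = x₀ ∧ X 1 = x₁ ∧ deriv X 0 = v₀ ∧ deriv X 1 = v₁ ∧
        y = ∫ t in (0:ℝ)..1, ‖deriv (deriv X) t‖ ^ 2 }
      (splineCost x₀ x₁ v₀ v₁) :=
  stmt0_general d x₀ x₁ v₀ v₁
end
end

section
/- Let d ≥ 1 and N ≥ 1. For every x = (x₀,…,x_N) ∈ (ℝ^d)^{N+1}, the function (v₀,…,v_N) ↦ Σ_{i=0}^{N−1} c(x_i, x_{i+1}, v_i, v_{i+1}) has a unique minimizer 𝕍(x) ∈ (ℝ^d)^{N+1}, and the map x ↦ 𝕍(x) is linear, i.e., 𝕍(a·x + b·y) = a·𝕍(x) + b·𝕍(y) for all a, b ∈ ℝ and x, y ∈ (ℝ^d)^{N+1}. -/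
open MeasureTheory

noncomputable section

/-!
Completing the square, `c(x, x', v, v') = 3‖2(x' − x) − v − v'‖² + ‖v' − v‖²`, so the energy
`E(x, v) = Σᵢ c(xᵢ, xᵢ₊₁, vᵢ, vᵢ₊₁)` is a quadratic form in the pair `(x, v)` whose restriction to
`x = 0` is positive definite once `N ≥ 1`. For such a form, `v` minimises `E(x, ·)` as soon as the
polar form `E((x, v), (0, h))` vanishes for all `h`. This is a linear equation `L₁ x + L₂ v = 0`
in which `L₂`, from velocities to their dual, is injective and hence invertible in finite
dimension; so `𝕍(x) = −L₂⁻¹ L₁ x` is a minimiser, it is linear in `x`, and strict positivity of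
`E(0, ·)` makes it unique.
-/

namespace QuadraticMap

theorem map_add_inr {R E V N : Type*} [CommRing R] [AddCommGroup E] [Module R E]
    [AddCommGroup V] [Module R V] [AddCommGroup N] [Module R N]
    (Q : QuadraticMap R (E × V) N) (x : E) (v h : V) :
    Q (x, v + h) = Q (x, v) + polar Q (x, v) (0, h) + Q (0, h) := by
  rw [polar, Prod.mk_add_mk, add_zero]
  abel

variable {𝕜 E V : Type*} [Field 𝕜] [LinearOrder 𝕜] [IsStrictOrderedRing 𝕜]
  [AddCommGroup E] [Module 𝕜 E] [AddCommGroup V] [Module 𝕜 V]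

theorem PosDef.injective_polarBilin {Q : QuadraticForm 𝕜 V} (hQ : Q.PosDef) :
    Function.Injective (polarBilin Q) := by
  refine (injective_iff_map_eq_zero _).2 fun v hv => hQ.anisotropic v ?_
  have h2 : polar Q v v = 0 := congr($hv v)
  rw [polar_self, two_smul, ← two_mul] at h2
  simpa using h2

variable [FiniteDimensional 𝕜 V]

def PosDef.polarEquivDual {Q : QuadraticForm 𝕜 V} (hQ : Q.PosDef) :
    V ≃ₗ[𝕜] Module.Dual 𝕜 V :=
  LinearMap.linearEquivOfInjective _ hQ.injective_polarBilin Subspace.dual_finrank_eq.symm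

@[simp]
theorem PosDef.polarEquivDual_apply {Q : QuadraticForm 𝕜 V} (hQ : Q.PosDef) (v w : V) :
    hQ.polarEquivDual v w = polar Q v w :=
  rfl

variable {Q : QuadraticForm 𝕜 (E × V)}

def partialMinimizer (hQ : (Q.comp (LinearMap.inr 𝕜 E V)).PosDef) : E →ₗ[𝕜] V :=
  -(hQ.polarEquivDual.symm.toLinearMap ∘ₗ
    (polarBilin Q).compl₁₂ (LinearMap.inl 𝕜 E V) (LinearMap.inr 𝕜 E V))

variable (hQ : (Q.comp (LinearMap.inr 𝕜 E V)).PosDef)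

theorem polar_partialMinimizer_inr (x : E) (h : V) :
    polar Q (x, partialMinimizer hQ x) (0, h) = 0 := by
  set m := hQ.polarEquivDual.symm
    ((polarBilin Q).compl₁₂ (LinearMap.inl 𝕜 E V) (LinearMap.inr 𝕜 E V) x)
  have hm : polar Q (0, m) (0, h) = polar Q (x, 0) (0, h) := by
    have := congr($(hQ.polarEquivDual.apply_symm_apply
      ((polarBilin Q).compl₁₂ (LinearMap.inl 𝕜 E V) (LinearMap.inr 𝕜 E V) x)) h)
    simp only [PosDef.polarEquivDual_apply, polar, comp_apply, LinearMap.inr_apply,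
      LinearMap.compl₁₂_apply, polarBilin_apply_apply, LinearMap.inl_apply] at this
    simpa only [polar, Prod.mk_add_mk, add_zero] using this
  have hsplit : (x, partialMinimizer hQ x) = (x, 0) - (0, m) := by simp [partialMinimizer, m]
  rw [hsplit, polar_sub_left, hm, sub_self]

theorem map_partialMinimizer_add (x : E) (h : V) :
    Q (x, partialMinimizer hQ x + h) =
      Q (x, partialMinimizer hQ x) + Q.comp (LinearMap.inr 𝕜 E V) h := by
  rw [map_add_inr, polar_partialMinimizer_inr, add_zero, comp_apply, LinearMap.inr_apply]

theorem map_partialMinimizer_le (x : E) (w : V) : Q (x, partialMinimizer hQ x) ≤ Q (x, w) :=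
  calc Q (x, partialMinimizer hQ x)
      ≤ Q (x, partialMinimizer hQ x) + Q.comp (LinearMap.inr 𝕜 E V) (w - partialMinimizer hQ x) :=
        le_add_of_nonneg_right (hQ.nonneg _)
    _ = Q (x, w) := by rw [← map_partialMinimizer_add, add_sub_cancel]

theorem eq_partialMinimizer_of_forall_le {x : E} {w : V} (hw : ∀ u, Q (x, w) ≤ Q (x, u)) :
    w = partialMinimizer hQ x := by
  by_contra hne
  have hsplit := map_partialMinimizer_add hQ x (w - partialMinimizer hQ x)
  rw [add_sub_cancel] at hsplit
  linarith [hQ _ (sub_ne_zero.2 hne), hw (partialMinimizer hQ x)]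

end QuadraticMap

section

variable {F : Type*} [NormedAddCommGroup F] [InnerProductSpace ℝ F]

variable (F) in
def normSqForm : QuadraticForm ℝ F := LinearMap.BilinMap.toQuadraticMap (innerₗ F)

@[simp]
theorem normSqForm_apply (z : F) : normSqForm F z = ‖z‖ ^ 2 := real_inner_self_eq_norm_sq z

open LinearMap

variable {N : ℕ}

def segmentDiff (i : Fin N) : (Fin (N + 1) → F) →ₗ[ℝ] F where
  toFun x := x i.succ - x i.castSucc
  map_add' x y := by simp only [Pi.add_apply]; abel
  map_smul' c x := by simp [smul_sub]

def segmentSum (i : Fin N) : (Fin (N + 1) → F) →ₗ[ℝ] F where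
  toFun x := x i.castSucc + x i.succ
  map_add' x y := by simp only [Pi.add_apply]; abel
  map_smul' c x := by simp [smul_add]

variable (F N) in
def splineEnergyForm : QuadraticForm ℝ ((Fin (N + 1) → F) × (Fin (N + 1) → F)) :=
  ∑ i : Fin N,
    (3 • (normSqForm F).comp ((2 : ℝ) • segmentDiff i ∘ₗ fst ℝ _ _ - segmentSum i ∘ₗ snd ℝ _ _) +
      (normSqForm F).comp (segmentDiff i ∘ₗ snd ℝ _ _))

theorem splineEnergyForm_apply (x v : Fin (N + 1) → F) :
    splineEnergyForm F N (x, v) = ∑ i : Fin N,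
      (3 * ‖(2 : ℝ) • (x i.succ - x i.castSucc) - v i.castSucc - v i.succ‖ ^ 2
        + ‖v i.succ - v i.castSucc‖ ^ 2) := by
  simp [splineEnergyForm, segmentDiff, segmentSum, sub_add_eq_sub_sub]

theorem Fin.exists_castSucc_or_succ_eq (hN : 1 ≤ N) (j : Fin (N + 1)) :
    ∃ i : Fin N, i.castSucc = j ∨ i.succ = j := by
  rcases eq_or_ne j 0 with rfl | hj
  · exact ⟨⟨0, hN⟩, Or.inl rfl⟩
  · obtain ⟨i, rfl⟩ := Fin.exists_succ_eq.2 hj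
    exact ⟨i, Or.inr rfl⟩

theorem splineEnergyForm_comp_inr_posDef (hN : 1 ≤ N) :
    ((splineEnergyForm F N).comp (inr ℝ _ _)).PosDef := by
  intro h hh
  obtain ⟨j, hj⟩ : ∃ j, h j ≠ 0 := by
    by_contra! H
    exact hh (funext H)
  obtain ⟨i, hi⟩ := Fin.exists_castSucc_or_succ_eq hN j
  have hpos : 0 < ‖h i.castSucc‖ ^ 2 + ‖h i.succ‖ ^ 2 := by
    have := norm_pos_iff.2 hj
    rcases hi with rfl | rfl <;> positivity
  rw [QuadraticMap.comp_apply, inr_apply, splineEnergyForm_apply]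
  refine Finset.sum_pos' (fun i _ => by positivity) ⟨i, Finset.mem_univ _, ?_⟩
  have := parallelogram_law_with_norm ℝ (h i.castSucc) (h i.succ)
  simp only [Pi.zero_apply, sub_zero, smul_zero, zero_sub, ← neg_add', norm_neg, norm_sub_rev]
  nlinarith [norm_nonneg (h i.castSucc + h i.succ)]
end

theorem splineCost_eq {d : ℕ} (x x' v v' : EuclideanSpace ℝ (Fin d)) :
    splineCost x x' v v' = 3 * ‖(2 : ℝ) • (x' - x) - v - v'‖ ^ 2 + ‖v' - v‖ ^ 2 := by
  simp only [splineCost, ← real_inner_self_eq_norm_sq, inner_sub_left, inner_sub_right,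
    real_inner_smul_right, real_inner_comm]
  ring

theorem splineEnergyForm_apply_eq_sum_splineCost {d N : ℕ}
    (x v : Fin (N + 1) → EuclideanSpace ℝ (Fin d)) :
    splineEnergyForm _ N (x, v) =
      ∑ i : Fin N, splineCost (x i.castSucc) (x i.succ) (v i.castSucc) (v i.succ) := by
  simp only [splineEnergyForm_apply, splineCost_eq]

open QuadraticMap

theorem stmt4_general (d N : ℕ) (hN : 1 ≤ N) :
    ∃ V : (Fin (N + 1) → EuclideanSpace ℝ (Fin d)) →
        (Fin (N + 1) → EuclideanSpace ℝ (Fin d)),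
      (∀ x : Fin (N + 1) → EuclideanSpace ℝ (Fin d),
        (∀ w : Fin (N + 1) → EuclideanSpace ℝ (Fin d),
          (∑ i : Fin N, splineCost (x i.castSucc) (x i.succ) (V x i.castSucc) (V x i.succ)) ≤
          ∑ i : Fin N, splineCost (x i.castSucc) (x i.succ) (w i.castSucc) (w i.succ)) ∧
        (∀ w : Fin (N + 1) → EuclideanSpace ℝ (Fin d),
          (∀ u : Fin (N + 1) → EuclideanSpace ℝ (Fin d),
            (∑ i : Fin N, splineCost (x i.castSucc) (x i.succ) (w i.castSucc) (w i.succ)) ≤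
            ∑ i : Fin N, splineCost (x i.castSucc) (x i.succ) (u i.castSucc) (u i.succ)) →
          w = V x)) ∧
      (∀ (a b : ℝ) (x y : Fin (N + 1) → EuclideanSpace ℝ (Fin d)),
        V (a • x + b • y) = a • V x + b • V y) := by
  have hQ := splineEnergyForm_comp_inr_posDef (F := EuclideanSpace ℝ (Fin d)) hN
  refine ⟨partialMinimizer hQ, fun x ↦ ⟨fun w ↦ ?_, fun w hw ↦ ?_⟩, fun a b x y ↦ by simp⟩
  · simpa only [splineEnergyForm_apply_eq_sum_splineCost] using map_partialMinimizer_le hQ x w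
  · refine eq_partialMinimizer_of_forall_le hQ fun u ↦ ?_
    simpa only [splineEnergyForm_apply_eq_sum_splineCost] using hw u

/-- For each `x`, the function `v ↦ Σ_{i=0}^{N−1} c(x_i, x_{i+1}, v_i, v_{i+1})` has a
unique minimizer `𝕍(x)`, and the map `x ↦ 𝕍(x)` is linear. -/
theorem stmt4 (d N : ℕ) (hd : 1 ≤ d) (hN : 1 ≤ N) :
    ∃ V : (Fin (N + 1) → EuclideanSpace ℝ (Fin d)) →
        (Fin (N + 1) → EuclideanSpace ℝ (Fin d)),
      (∀ x : Fin (N + 1) → EuclideanSpace ℝ (Fin d),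
        (∀ w : Fin (N + 1) → EuclideanSpace ℝ (Fin d),
          (∑ i : Fin N, splineCost (x i.castSucc) (x i.succ) (V x i.castSucc) (V x i.succ)) ≤
          ∑ i : Fin N, splineCost (x i.castSucc) (x i.succ) (w i.castSucc) (w i.succ)) ∧
        (∀ w : Fin (N + 1) → EuclideanSpace ℝ (Fin d),
          (∀ u : Fin (N + 1) → EuclideanSpace ℝ (Fin d),
            (∑ i : Fin N, splineCost (x i.castSucc) (x i.succ) (w i.castSucc) (w i.succ)) ≤
            ∑ i : Fin N, splineCost (x i.castSucc) (x i.succ) (u i.castSucc) (u i.succ)) →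
          w = V x)) ∧
      (∀ (a b : ℝ) (x y : Fin (N + 1) → EuclideanSpace ℝ (Fin d)),
        V (a • x + b • y) = a • V x + b • V y) :=
  stmt4_general d N hN
end
end

section
/- Let d ≥ 1. The cost c satisfies the twist condition: for every fixed (x₀, v₀) ∈ ℝ^d × ℝ^d, the map ℝ^d × ℝ^d → ℝ^d × ℝ^d given by (x₁, v₁) ↦ ∇_{(x₀,v₀)} c(x₀,x₁,v₀,v₁), i.e., the gradient of c with respect to its first and third arguments, which equals (−24(x₁ − x₀ − v₀) + 12(v₁ − v₀), −12(x₁ − x₀ − v₀) + 4(v₁ − v₀)), is injective. -/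
open MeasureTheory

noncomputable section

/-- Twist condition for the cost `c`: for fixed `(x₀, v₀)`, the gradient of
`c(x₀, x₁, v₀, v₁)` with respect to `(x₀, v₀)`, namely
`(x₁, v₁) ↦ (−24(x₁−x₀−v₀) + 12(v₁−v₀), −12(x₁−x₀−v₀) + 4(v₁−v₀))`, is injective. -/
theorem stmt12 (d : ℕ) (hd : 1 ≤ d) (x₀ v₀ : EuclideanSpace ℝ (Fin d)) :
    Function.Injective
      (fun p : EuclideanSpace ℝ (Fin d) × EuclideanSpace ℝ (Fin d) =>
        (-(24:ℝ) • (p.1 - x₀ - v₀) + (12:ℝ) • (p.2 - v₀),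
         -(12:ℝ) • (p.1 - x₀ - v₀) + (4:ℝ) • (p.2 - v₀))) := by
  intro p q h
  simp only [Prod.mk.injEq] at h
  obtain ⟨h1, h2⟩ := h
  have e1 : -(24:ℝ) • (p.1 - q.1) + (12:ℝ) • (p.2 - q.2) = 0 := by
    have := sub_eq_zero.mpr h1
    rw [show -(24:ℝ) • (p.1 - x₀ - v₀) + (12:ℝ) • (p.2 - v₀) -
        (-(24:ℝ) • (q.1 - x₀ - v₀) + (12:ℝ) • (q.2 - v₀)) =
        -(24:ℝ) • (p.1 - q.1) + (12:ℝ) • (p.2 - q.2) by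
      simp only [smul_sub]; abel] at this
    exact this
  have e2 : -(12:ℝ) • (p.1 - q.1) + (4:ℝ) • (p.2 - q.2) = 0 := by
    have := sub_eq_zero.mpr h2
    rw [show -(12:ℝ) • (p.1 - x₀ - v₀) + (4:ℝ) • (p.2 - v₀) -
        (-(12:ℝ) • (q.1 - x₀ - v₀) + (4:ℝ) • (q.2 - v₀)) =
        -(12:ℝ) • (p.1 - q.1) + (4:ℝ) • (p.2 - q.2) by
      simp only [smul_sub]; abel] at this
    exact this
  have ha : ((12:ℝ)) • (p.1 - q.1) = 0 := by
    linear_combination (norm := module) e1 - (3:ℝ) • e2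
  have hpq1 : p.1 = q.1 :=
    sub_eq_zero.mp ((smul_eq_zero.mp ha).resolve_left (by norm_num))
  have hb : ((4:ℝ)) • (p.2 - q.2) = 0 := by
    rw [hpq1] at e2; simpa using e2
  have hpq2 : p.2 = q.2 :=
    sub_eq_zero.mp ((smul_eq_zero.mp hb).resolve_left (by norm_num))
  exact Prod.ext hpq1 hpq2
end
end

section
/- Let d ≥ 1 and let x₀, x₁, x₂ ∈ ℝ^d. Then the infimum of ∫₀² ‖X''(t)‖² dt over all twice continuously differentiable curves X : [0,2] → ℝ^d with X(0) = x₀, X(1) = x₁, X(2) = x₂ equals (3/2)·‖x₀ − 2x₁ + x₂‖², i.e., 𝒞(x₀,x₁,x₂) = (3/2)·‖x₀ − 2x₁ + x₂‖². -/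
/-!
With the Peano kernel `tent t = 1 - |t - 1|`, integration by parts on `[0, 1]` and `[1, 2]` gives
`∫₀² tent • X'' = X 0 - 2 X 1 + X 2 =: Δ`. Cauchy–Schwarz then gives
`‖Δ‖² ≤ (∫₀² tent²) (∫₀² ‖X''‖²) = (2/3) ∫₀² ‖X''‖²`. Equality holds for the curve through `x₀` and
`x₁` with `X'' = (3/2) tent • Δ`, obtained by integrating twice; the same identity shows that it
passes through `x₂`.
-/

open MeasureTheory intervalIntegral Set

def tent (t : ℝ) : ℝ := 1 - |t - 1|

@[fun_prop]
theorem continuous_tent : Continuous tent := by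
  unfold tent; fun_prop

theorem tent_of_le_one {t : ℝ} (ht : t ≤ 1) : tent t = t := by
  rw [tent, abs_of_nonpos (by linarith)]; ring

theorem tent_of_one_le {t : ℝ} (ht : 1 ≤ t) : tent t = 2 - t := by
  rw [tent, abs_of_nonneg (by linarith)]; ring

theorem integral_tent_sq : ∫ t in (0:ℝ)..2, tent t ^ 2 = 2 / 3 := by
  have hint : ∀ a b : ℝ, IntervalIntegrable (fun t => tent t ^ 2) volume a b :=
    fun a b => (continuous_tent.pow 2).intervalIntegrable a b
  have h₁ : ∫ t in (0:ℝ)..1, tent t ^ 2 = ∫ t in (0:ℝ)..1, t ^ 2 :=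
    integral_congr fun t ht => by
      rw [uIcc_of_le zero_le_one] at ht; simp only [tent_of_le_one ht.2]
  have h₂ : ∫ t in (1:ℝ)..2, tent t ^ 2 = ∫ t in (1:ℝ)..2, (t - 2) ^ 2 :=
    integral_congr fun t ht => by
      rw [uIcc_of_le one_le_two] at ht; simp only [tent_of_one_le ht.1]; ring
  rw [← integral_add_adjacent_intervals (hint 0 1) (hint 1 2), h₁, h₂,
    integral_comp_sub_right (fun t => t ^ 2), integral_pow, integral_pow]
  norm_num

section NormedSpace

variable {E : Type*} [NormedAddCommGroup E] [NormedSpace ℝ E]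

theorem contDiff_two_iff_differentiable_deriv {X : ℝ → E} :
    ContDiff ℝ 2 X ↔
      Differentiable ℝ X ∧ Differentiable ℝ (deriv X) ∧ Continuous (deriv (deriv X)) := by
  rw [show (2 : WithTop ℕ∞) = 1 + 1 from rfl, contDiff_succ_iff_deriv, contDiff_one_iff_deriv]
  simp

variable [CompleteSpace E]

theorem integral_sub_smul_eq_of_hasDerivAt {X X' X'' : ℝ → E} {a b : ℝ} (c : ℝ)
    (hX : ∀ t ∈ uIcc a b, HasDerivAt X (X' t) t) (hX' : ∀ t ∈ uIcc a b, HasDerivAt X' (X'' t) t)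
    (hX'' : IntervalIntegrable X'' volume a b) :
    ∫ t in a..b, (t - c) • X'' t = ((b - c) • X' b - X b) - ((a - c) • X' a - X a) := by
  have hX'int : IntervalIntegrable X' volume a b :=
    ContinuousOn.intervalIntegrable fun t ht => (hX' t ht).continuousAt.continuousWithinAt
  have hparts := integral_smul_deriv_eq_deriv_smul (u := fun t => t - c) (u' := fun _ => 1)
    (fun t _ => (hasDerivAt_id' t).sub_const c) hX' intervalIntegrable_const hX''
  simp only [one_smul] at hparts
  rw [hparts, integral_eq_sub_of_hasDerivAt hX hX'int]
  abel

theorem integral_tent_smul_deriv_deriv {X : ℝ → E} (hX : ContDiff ℝ 2 X) :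
    ∫ t in (0:ℝ)..2, tent t • deriv (deriv X) t = X 0 - (2:ℝ) • X 1 + X 2 := by
  obtain ⟨hX₁, hX₂, hX₃⟩ := contDiff_two_iff_differentiable_deriv.mp hX
  have hint : ∀ a b : ℝ, IntervalIntegrable (fun t => tent t • deriv (deriv X) t) volume a b :=
    fun a b => (continuous_tent.smul hX₃).intervalIntegrable a b
  have h₁ : ∫ t in (0:ℝ)..1, tent t • deriv (deriv X) t
      = ∫ t in (0:ℝ)..1, (t - 0) • deriv (deriv X) t :=
    integral_congr fun t ht => by
      rw [uIcc_of_le zero_le_one] at ht; simp only [tent_of_le_one ht.2, sub_zero]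
  have h₂ : ∫ t in (1:ℝ)..2, tent t • deriv (deriv X) t
      = -∫ t in (1:ℝ)..2, (t - 2) • deriv (deriv X) t := by
    rw [← intervalIntegral.integral_neg]
    refine integral_congr fun t ht => ?_
    rw [uIcc_of_le one_le_two] at ht
    simp only [tent_of_one_le ht.1, ← neg_smul, neg_sub]
  rw [← integral_add_adjacent_intervals (hint 0 1) (hint 1 2), h₁, h₂,
    integral_sub_smul_eq_of_hasDerivAt 0 (fun t _ => (hX₁ t).hasDerivAt)
      (fun t _ => (hX₂ t).hasDerivAt) (hX₃.intervalIntegrable 0 1),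
    integral_sub_smul_eq_of_hasDerivAt 2 (fun t _ => (hX₁ t).hasDerivAt)
      (fun t _ => (hX₂ t).hasDerivAt) (hX₃.intervalIntegrable 1 2)]
  module

theorem exists_contDiff_two_deriv_deriv_eq {g : ℝ → E} (hg : Continuous g) (x₀ x₁ : E) :
    ∃ X : ℝ → E, ContDiff ℝ 2 X ∧ deriv (deriv X) = g ∧ X 0 = x₀ ∧ X 1 = x₁ := by
  set P₁ : ℝ → E := fun t => ∫ s in (0:ℝ)..t, g s
  set P₂ : ℝ → E := fun t => ∫ s in (0:ℝ)..t, P₁ s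
  have hP₁ : ∀ t, HasDerivAt P₁ (g t) t := fun t => (hg.integral_hasStrictDerivAt 0 t).hasDerivAt
  have hP₁c : Continuous P₁ := continuous_iff_continuousAt.2 fun t => (hP₁ t).continuousAt
  have hP₂ : ∀ t, HasDerivAt P₂ (P₁ t) t := fun t => (hP₁c.integral_hasStrictDerivAt 0 t).hasDerivAt
  set X : ℝ → E := fun t => x₀ + t • (x₁ - x₀ - P₂ 1) + P₂ t
  have hX : ∀ t, HasDerivAt X ((x₁ - x₀ - P₂ 1) + P₁ t) t := fun t => by
    simpa using ((hasDerivAt_id' t).smul_const (x₁ - x₀ - P₂ 1)).const_add x₀ |>.fun_add (hP₂ t)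
  have hX' : deriv X = fun t => (x₁ - x₀ - P₂ 1) + P₁ t := funext fun t => (hX t).deriv
  have hX'' : deriv (deriv X) = g := by
    rw [hX']; exact funext fun t => ((hP₁ t).const_add _).deriv
  refine ⟨X, contDiff_two_iff_differentiable_deriv.mpr ⟨fun t => (hX t).differentiableAt, ?_,
    hX'' ▸ hg⟩, hX'', by simp [X, P₂], by simp only [X, one_smul]; abel⟩
  rw [hX']; exact fun t => ((hP₁ t).const_add _).differentiableAt

end NormedSpace

section InnerProductSpace

variable {E : Type*} [NormedAddCommGroup E] [InnerProductSpace ℝ E] [CompleteSpace E]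

theorem sq_norm_integral_smul_div_le {f : ℝ → E} {g : ℝ → ℝ} {a b : ℝ} (hab : a ≤ b)
    (hf : Continuous f) (hg : Continuous g) :
    ‖∫ t in a..b, g t • f t‖ ^ 2 / ∫ t in a..b, g t ^ 2 ≤ ∫ t in a..b, ‖f t‖ ^ 2 := by
  set v := ∫ t in a..b, g t • f t
  set G := ∫ t in a..b, g t ^ 2
  -- Complete the square in `0 ≤ ∫ ‖f - G⁻¹ g • v‖²`; for `G = 0` the junk `G⁻¹ = 0` still works.
  have hexpand : ∀ t, ‖f t - (G⁻¹ * g t) • v‖ ^ 2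
      = ‖f t‖ ^ 2 - 2 * G⁻¹ * inner ℝ v (g t • f t) + G⁻¹ ^ 2 * ‖v‖ ^ 2 * g t ^ 2 := by
    intro t
    rw [norm_sub_sq_real, norm_smul, real_inner_smul_right, real_inner_smul_right,
      real_inner_comm v (f t), Real.norm_eq_abs, mul_pow, sq_abs]
    ring
  have hint : ∀ h : ℝ → ℝ, Continuous h → IntervalIntegrable h volume a b :=
    fun h hh => hh.intervalIntegrable a b
  have hnonneg : 0 ≤ ∫ t in a..b, ‖f t - (G⁻¹ * g t) • v‖ ^ 2 :=
    integral_nonneg hab fun t _ => sq_nonneg _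
  simp_rw [hexpand] at hnonneg
  rw [integral_add (hint _ (by fun_prop)) (hint _ (by fun_prop)),
    integral_sub (hint _ (by fun_prop)) (hint _ (by fun_prop)),
    intervalIntegral.integral_const_mul, intervalIntegral.integral_const_mul]
    at hnonneg
  have hinner : ∫ t in a..b, inner ℝ v (g t • f t) = ‖v‖ ^ 2 := by
    rw [← real_inner_self_eq_norm_sq]
    exact (innerSL ℝ v).intervalIntegral_comp_comm ((hg.smul hf).intervalIntegrable a b)
  have hG : G⁻¹ ^ 2 * G = G⁻¹ := by
    rcases eq_or_ne G 0 with hG | hG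
    · simp [hG]
    · field_simp
  rw [hinner] at hnonneg
  rw [div_eq_mul_inv]
  linear_combination hnonneg + ‖v‖ ^ 2 * hG

theorem mul_sq_norm_second_difference_le_integral {X : ℝ → E} (hX : ContDiff ℝ 2 X) :
    3 / 2 * ‖X 0 - (2:ℝ) • X 1 + X 2‖ ^ 2 ≤ ∫ t in (0:ℝ)..2, ‖deriv (deriv X) t‖ ^ 2 := by
  have h := sq_norm_integral_smul_div_le zero_le_two
    (contDiff_two_iff_differentiable_deriv.mp hX).2.2 continuous_tent
  rw [integral_tent_smul_deriv_deriv hX, integral_tent_sq] at h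
  linarith

theorem exists_contDiff_two_integral_eq (x₀ x₁ x₂ : E) :
    ∃ X : ℝ → E, ContDiff ℝ 2 X ∧ X 0 = x₀ ∧ X 1 = x₁ ∧ X 2 = x₂ ∧
      ∫ t in (0:ℝ)..2, ‖deriv (deriv X) t‖ ^ 2 = 3 / 2 * ‖x₀ - (2:ℝ) • x₁ + x₂‖ ^ 2 := by
  set Δ := x₀ - (2:ℝ) • x₁ + x₂
  obtain ⟨X, hX, hX'', hX0, hX1⟩ := exists_contDiff_two_deriv_deriv_eq
    (g := fun t => (3 / 2 * tent t) • Δ) (by fun_prop) x₀ x₁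
  have hsecond := integral_tent_smul_deriv_deriv hX
  simp only [hX'', smul_smul, hX0, hX1] at hsecond
  have hkernel : ∫ t in (0:ℝ)..2, tent t * (3 / 2 * tent t) = 1 := by
    simp_rw [mul_left_comm (tent _), ← sq]
    rw [intervalIntegral.integral_const_mul, integral_tent_sq]
    norm_num
  rw [intervalIntegral.integral_smul_const, hkernel, one_smul] at hsecond
  refine ⟨X, hX, hX0, hX1, add_left_cancel hsecond.symm, ?_⟩
  simp only [hX'', norm_smul, mul_pow, Real.norm_eq_abs, sq_abs]
  rw [intervalIntegral.integral_mul_const, intervalIntegral.integral_const_mul, integral_tent_sq]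
  norm_num

theorem isLeast_integral_norm_deriv_deriv_sq (x₀ x₁ x₂ : E) :
    IsLeast { y : ℝ | ∃ X : ℝ → E, ContDiff ℝ 2 X ∧ X 0 = x₀ ∧ X 1 = x₁ ∧ X 2 = x₂ ∧
        y = ∫ t in (0:ℝ)..2, ‖deriv (deriv X) t‖ ^ 2 }
      (3 / 2 * ‖x₀ - (2:ℝ) • x₁ + x₂‖ ^ 2) := by
  refine ⟨?_, ?_⟩
  · obtain ⟨X, hX, h₀, h₁, h₂, hI⟩ := exists_contDiff_two_integral_eq x₀ x₁ x₂
    exact ⟨X, hX, h₀, h₁, h₂, hI.symm⟩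
  · rintro y ⟨X, hX, rfl, rfl, rfl, rfl⟩
    exact mul_sq_norm_second_difference_le_integral hX

end InnerProductSpace

theorem stmt14_general (d : ℕ) (x₀ x₁ x₂ : EuclideanSpace ℝ (Fin d)) :
    sInf { y : ℝ | ∃ X : ℝ → EuclideanSpace ℝ (Fin d), ContDiff ℝ 2 X ∧
        X 0 = x₀ ∧ X 1 = x₁ ∧ X 2 = x₂ ∧
        y = ∫ t in (0:ℝ)..2, ‖deriv (deriv X) t‖ ^ 2 }
      = (3 / 2) * ‖x₀ - (2:ℝ) • x₁ + x₂‖ ^ 2 :=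
  (isLeast_integral_norm_deriv_deriv_sq x₀ x₁ x₂).csInf_eq

/-- For `N = 2`, the infimum `𝒞(x₀,x₁,x₂)` of `∫₀² ‖X''‖²` over C² curves with
`X(0) = x₀`, `X(1) = x₁`, `X(2) = x₂` equals `(3/2)‖x₀ − 2x₁ + x₂‖²`. -/
theorem stmt14 (d : ℕ) (hd : 1 ≤ d) (x₀ x₁ x₂ : EuclideanSpace ℝ (Fin d)) :
    sInf { y : ℝ | ∃ X : ℝ → EuclideanSpace ℝ (Fin d), ContDiff ℝ 2 X ∧
        X 0 = x₀ ∧ X 1 = x₁ ∧ X 2 = x₂ ∧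
        y = ∫ t in (0:ℝ)..2, ‖deriv (deriv X) t‖ ^ 2 }
      = (3 / 2) * ‖x₀ - (2:ℝ) • x₁ + x₂‖ ^ 2 :=
  stmt14_general d x₀ x₁ x₂
end

section
/- Let n ≥ 1 and N ≥ 1. Let Σ̂₀,…,Σ̂_N be symmetric positive semidefinite n × n real matrices and S₀,…,S_{N−1} be n × n real matrices such that for every i = 0,…,N−1 the 2n × 2n block matrix [[Σ̂_i, S_i],[S_iᵀ, Σ̂_{i+1}]] is positive semidefinite. Then there exists a symmetric positive semidefinite n(N+1) × n(N+1) real matrix Σ̂, regarded as an (N+1) × (N+1) array of n × n blocks, whose (i,i) block equals Σ̂_i for every i = 0,…,N and whose (i,i+1) block equals S_i for every i = 0,…,N−1. -/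
/-!
Factor each positive semidefinite block matrix `[[Σ̂ᵢ, Sᵢ], [Sᵢᵀ, Σ̂ᵢ₊₁]]` as the Gram matrix of
two families `aᵢ, bᵢ` in one Euclidean space. Families with equal Gram matrices differ by a
linear isometry, and `bᵢ` and `aᵢ₊₁` both have Gram matrix `Σ̂ᵢ₊₁`; so, moving each new pair by
an isometry onto the family already placed, the pairs glue into a single chain `T₀, …, T_N`.
Its Gram matrix is the required `Σ̂`.
-/

open Matrix InnerProductSpace
open scoped ComplexOrder

variable {𝕜 V W W' ι : Type*} [RCLike 𝕜] [NormedAddCommGroup V] [InnerProductSpace 𝕜 V]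
  [NormedAddCommGroup W'] [InnerProductSpace 𝕜 W']

theorem LinearMap.exists_linearIsometry_apply_eq_of_norm_eq [FiniteDimensional 𝕜 V]
    [AddCommGroup W] [Module 𝕜 W] (f g : W →ₗ[𝕜] V) (h : ∀ x, ‖f x‖ = ‖g x‖) :
    ∃ Q : V →ₗᵢ[𝕜] V, ∀ x, Q (f x) = g x := by
  have hker : ker f ≤ ker g := fun x hx => by
    simpa [mem_ker, ← norm_eq_zero, h] using hx
  let L : range f →ₗ[𝕜] V := (ker f).liftQ g hker ∘ₗ f.quotKerEquivRange.symm
  have hL : ∀ x, L ⟨f x, mem_range_self f x⟩ = g x := fun x => by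
    simp [L, quotKerEquivRange_symm_apply_image]
  let Li : range f →ₗᵢ[𝕜] V := ⟨L, by rintro ⟨_, x, rfl⟩; simp [hL, h]⟩
  exact ⟨Li.extend, fun x => (Li.extend_apply ⟨f x, mem_range_self f x⟩).trans (hL x)⟩

theorem Matrix.exists_linearIsometry_apply_eq_of_gram_eq [FiniteDimensional 𝕜 V] [Fintype ι]
    {u v : ι → V} (h : gram 𝕜 u = gram 𝕜 v) : ∃ Q : V →ₗᵢ[𝕜] V, ∀ k, Q (u k) = v k := by
  classical
  have hinner : ∀ k l, ⟪u k, u l⟫_𝕜 = ⟪v k, v l⟫_𝕜 := fun k l => by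
    simpa [gram_apply] using congrFun (congrFun h k) l
  obtain ⟨Q, hQ⟩ := (Fintype.linearCombination 𝕜 u).exists_linearIsometry_apply_eq_of_norm_eq
    (Fintype.linearCombination 𝕜 v) fun c => by
      have : ⟪∑ k, c k • u k, ∑ k, c k • u k⟫_𝕜 =
          ⟪∑ k, c k • v k, ∑ k, c k • v k⟫_𝕜 := by
        simp only [sum_inner, inner_sum, inner_smul_left, inner_smul_right, hinner]
      rw [← sq_eq_sq₀ (norm_nonneg _) (norm_nonneg _), ← inner_self_eq_norm_sq (𝕜 := 𝕜),
        ← inner_self_eq_norm_sq (𝕜 := 𝕜)]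
      simpa [Fintype.linearCombination_apply] using congrArg RCLike.re this
  exact ⟨Q, fun k => by simpa [Fintype.linearCombination_apply_single] using hQ (Pi.single k 1)⟩

theorem Matrix.PosSemidef.exists_eq_gram [Fintype ι] {A : Matrix ι ι 𝕜} (hA : A.PosSemidef) :
    ∃ v : ι → EuclideanSpace 𝕜 ι, gram 𝕜 v = A := by
  classical
  open scoped MatrixOrder in
  obtain ⟨B, rfl⟩ := CStarAlgebra.nonneg_iff_eq_star_mul_self.mp hA.nonneg
  refine ⟨fun k => WithLp.toLp 2 fun r => B r k, ?_⟩
  rw [gram_eq_conjTranspose_mul (EuclideanSpace.basisFun ι 𝕜)]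
  rfl

theorem LinearIsometry.gram_comp (Q : V →ₗᵢ[𝕜] W') (v : ι → V) : gram 𝕜 (Q ∘ v) = gram 𝕜 v := by
  ext k l
  simp [gram_apply]

theorem Matrix.PosSemidef.exists_gram_fromBlocks {κ : Type*} [Fintype ι] [Fintype κ]
    {A : Matrix ι ι 𝕜} {B : Matrix ι κ 𝕜} {C : Matrix κ ι 𝕜} {D : Matrix κ κ 𝕜}
    (h : (fromBlocks A B C D).PosSemidef) :
    ∃ (a : ι → EuclideanSpace 𝕜 (ι ⊕ κ)) (b : κ → EuclideanSpace 𝕜 (ι ⊕ κ)),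
      gram 𝕜 a = A ∧ gram 𝕜 b = D ∧ ∀ k l, ⟪a k, b l⟫_𝕜 = B k l := by
  obtain ⟨u, hu⟩ := h.exists_eq_gram
  refine ⟨u ∘ Sum.inl, u ∘ Sum.inr, ?_, ?_, fun k l => ?_⟩
  · ext k l; simpa using congrFun (congrFun hu (.inl k)) (.inl l)
  · ext k l; simpa using congrFun (congrFun hu (.inr k)) (.inr l)
  · simpa using congrFun (congrFun hu (.inl k)) (.inr l)

theorem Matrix.exists_gram_chain [FiniteDimensional 𝕜 V] [Fintype ι] :
    ∀ {N : ℕ} (G : Fin (N + 1) → Matrix ι ι 𝕜) (C : Fin N → Matrix ι ι 𝕜) (T₀ : ι → V),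
      gram 𝕜 T₀ = G 0 →
      (∀ i, ∃ a b : ι → V, gram 𝕜 a = G i.castSucc ∧ gram 𝕜 b = G i.succ ∧
        ∀ k l, ⟪a k, b l⟫_𝕜 = C i k l) →
      ∃ T : Fin (N + 1) → ι → V, T 0 = T₀ ∧ (∀ i, gram 𝕜 (T i) = G i) ∧
        ∀ i k l, ⟪T i.castSucc k, T i.succ l⟫_𝕜 = C i k l
  | 0, G, _, T₀, h₀, _ =>
    ⟨fun _ => T₀, rfl, fun i => by rwa [Fin.fin_one_eq_zero i], finZeroElim⟩
  | N + 1, G, C, T₀, h₀, hlink => by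
    obtain ⟨a, b, ha, hb, hab⟩ := hlink 0
    obtain ⟨Q, hQ⟩ := exists_linearIsometry_apply_eq_of_gram_eq (ha.trans h₀.symm)
    obtain ⟨T, hT₀, hT, hTT⟩ :=
      exists_gram_chain (fun i => G i.succ) (fun i => C i.succ) (Q ∘ b) ((Q.gram_comp b).trans hb)
        fun i => by simpa only [Fin.succ_castSucc] using hlink i.succ
    refine ⟨Fin.cons T₀ T, rfl, Fin.cases h₀ hT, Fin.cases (fun k l => ?_) fun i => ?_⟩
    · simpa [hT₀, ← hQ, Q.inner_map_map] using hab k l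
    · simpa only [← Fin.succ_castSucc, Fin.cons_succ] using hTT i

theorem stmt15_general (n N : ℕ) (hN : 1 ≤ N)
    (Sh : Fin (N + 1) → Matrix (Fin n) (Fin n) ℝ)
    (S : Fin N → Matrix (Fin n) (Fin n) ℝ)
    (hblock : ∀ i : Fin N,
      (Matrix.fromBlocks (Sh i.castSucc) (S i) (S i)ᵀ (Sh i.succ)).PosSemidef) :
    ∃ M : Matrix (Fin (N + 1) × Fin n) (Fin (N + 1) × Fin n) ℝ,
      M.PosSemidef ∧
      (∀ (i : Fin (N + 1)) (k l : Fin n), M (i, k) (i, l) = Sh i k l) ∧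
      (∀ (i : Fin N) (k l : Fin n), M (i.castSucc, k) (i.succ, l) = S i k l) := by
  have hlink := fun i => (hblock i).exists_gram_fromBlocks
  obtain ⟨T₀, -, hT₀, -⟩ := hlink ⟨0, hN⟩
  obtain ⟨T, -, hT, hTT⟩ := exists_gram_chain Sh S T₀ hT₀ hlink
  refine ⟨gram ℝ fun p : Fin (N + 1) × Fin n => T p.1 p.2, posSemidef_gram ℝ _,
    fun i k l => ?_, hTT⟩
  rw [← hT i]
  rfl

/-- Given symmetric PSD `n×n` matrices `Σ̂₀,…,Σ̂_N` and matrices `S₀,…,S_{N−1}` such that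
each block matrix `[[Σ̂ᵢ, Sᵢ],[Sᵢᵀ, Σ̂ᵢ₊₁]]` is PSD, there exists a PSD
`n(N+1) × n(N+1)` matrix whose `(i,i)` block is `Σ̂ᵢ` and whose `(i,i+1)` block is
`Sᵢ`. -/
theorem stmt15 (n N : ℕ) (hn : 1 ≤ n) (hN : 1 ≤ N)
    (Sh : Fin (N + 1) → Matrix (Fin n) (Fin n) ℝ)
    (S : Fin N → Matrix (Fin n) (Fin n) ℝ)
    (hSh : ∀ i, (Sh i).PosSemidef)
    (hblock : ∀ i : Fin N,
      (Matrix.fromBlocks (Sh i.castSucc) (S i) (S i)ᵀ (Sh i.succ)).PosSemidef) :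
    ∃ M : Matrix (Fin (N + 1) × Fin n) (Fin (N + 1) × Fin n) ℝ,
      M.PosSemidef ∧
      (∀ (i : Fin (N + 1)) (k l : Fin n), M (i, k) (i, l) = Sh i k l) ∧
      (∀ (i : Fin N) (k l : Fin n), M (i.castSucc, k) (i.succ, l) = S i k l) :=
  stmt15_general n N hN Sh S hblock
end
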